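/- Let p1, p3, p4 ∈ ℂ[v,y] ⊂ S, q1, q3, q4 ∈ ℂ[v] ⊂ S and k1, k3, k4 ∈ ℂ. Set E1 = (−v²y² + p1·t)∂_y + q1·t·∂_v + k1·t·∂_t, E3 = p3·t·∂_y + (1 + q3·t)∂_v + k3·t·∂_t and E4 = (−v·y² + p4·t)∂_y + q4·t·∂_v + k4·t·∂_t. If [E1,E3] ≡ −2·E4 (mod t²), then k4 = 0 and −∂_v q1 + k1·q3 − k3·q1 = −2·q4 in ℂ[v]. -/

import Mathlib

/-! Only the `t`- and `v`-components of `[E1,E3] + 2 E4` are needed. A direct computation shows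
that each is `t · ι1 A` modulo `t²` for an explicit `A ∈ ℂ[v]`; since `t` is a non-zero-divisor
and `ℂ[v]` meets the ideal `(t)` only in `0`, membership in `(t²)` forces `A = 0`. -/

open MvPolynomial

noncomputable section

/-- `S = ℂ[v,y,t]` with `v = X 0`, `y = X 1`, `t = X 2`. -/
abbrev S : Type := MvPolynomial (Fin 3) ℂ

/-- The variable `v`. -/ def V : S := X 0
/-- The variable `y`. -/ def Y : S := X 1
/-- The variable `t`. -/ def T : S := X 2

/-- The derivation `f ∂_y + g ∂_v + h ∂_t` of `S = ℂ[v,y,t]`, determined by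
`y ↦ f`, `v ↦ g`, `t ↦ h`. -/
def der (f g h : S) : Derivation ℂ S S :=
  MvPolynomial.mkDerivation ℂ ![g, f, h]

/-- The inclusion `ℂ[v,y] ⊂ S` (where in `ℂ[v,y]` the variable `X 0` is `v`
and `X 1` is `y`). -/
def ι2 : MvPolynomial (Fin 2) ℂ →ₐ[ℂ] S := aeval ![V, Y]

/-- The inclusion `ℂ[v] ⊂ S`. -/
def ι1 : Polynomial ℂ →ₐ[ℂ] S := Polynomial.aeval V

/-- `D ≡ D' (mod t²)`: the difference sends `y`, `v`, `t` into the ideal `(t²)`. -/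
def ModT2 (D D' : Derivation ℂ S S) : Prop :=
  ∀ i : Fin 3, (D - D') (X i) ∈ Ideal.span {T ^ 2}

@[simp]
lemma der_apply_V (f g h : S) : der f g h V = g := by
  simp [der, V, mkDerivation_X]

@[simp]
lemma der_apply_T (f g h : S) : der f g h T = h := by
  simp [der, T, mkDerivation_X]

@[simp]
lemma der_apply_ι1 (f g h : S) (q : Polynomial ℂ) :
    der f g h (ι1 q) = ι1 (Polynomial.derivative q) * g := by
  rw [ι1, Derivation.map_aeval, der_apply_V, smul_eq_mul, mul_comm]

@[simp]
lemma ι1_C (a : ℂ) : ι1 (Polynomial.C a) = C a := by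
  simp [ι1]

lemma mul_mem_span_singleton_sq_iff {R : Type*} [CommRing R] [IsDomain R] {x : R} (hx : x ≠ 0) (a : R) :
    a * x ∈ Ideal.span {x ^ 2} ↔ a ∈ Ideal.span {x} := by
  simp only [Ideal.mem_span_singleton, sq]
  exact mul_dvd_mul_iff_right hx

lemma eq_zero_of_ι1_mem_span_T {A : Polynomial ℂ} (hA : ι1 A ∈ Ideal.span {T}) : A = 0 := by
  obtain ⟨c, hc⟩ := Ideal.mem_span_singleton'.mp hA
  -- setting `v = X` and `y = t = 0` retracts `S` onto `ℂ[v]`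
  have := congrArg (aeval ![Polynomial.X, 0, 0] : S →ₐ[ℂ] Polynomial ℂ) hc
  rw [ι1, ← Polynomial.aeval_algHom_apply] at this
  simpa [V, T] using this.symm

lemma ι1_mul_T_mem_span_T_sq_iff (A : Polynomial ℂ) :
    ι1 A * T ∈ Ideal.span {T ^ 2} ↔ A = 0 :=
  ⟨fun hA => eq_zero_of_ι1_mem_span_T ((mul_mem_span_singleton_sq_iff (X_ne_zero 2) _).mp hA),
    fun hA => by simp [hA]⟩

section Bracket

variable (p1 p3 p4 : MvPolynomial (Fin 2) ℂ) (q1 q3 q4 : Polynomial ℂ) (k1 k3 k4 : ℂ)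

lemma bracket_sub_apply_T :
    (⁅der (-V ^ 2 * Y ^ 2 + ι2 p1 * T) (ι1 q1 * T) (C k1 * T),
        der (ι2 p3 * T) (1 + ι1 q3 * T) (C k3 * T)⁆ -
        (-2 : ℂ) • der (-V * Y ^ 2 + ι2 p4 * T) (ι1 q4 * T) (C k4 * T)) T =
      ι1 (Polynomial.C (2 * k4)) * T := by
  simp only [Derivation.sub_apply, Derivation.commutator_apply, Derivation.smul_apply,
    Derivation.leibniz, der_apply_T, derivation_C, smul_eq_mul, smul_eq_C_mul, ι1_C,
    map_mul, map_neg, map_ofNat]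
  ring

lemma bracket_sub_apply_V :
    (⁅der (-V ^ 2 * Y ^ 2 + ι2 p1 * T) (ι1 q1 * T) (C k1 * T),
        der (ι2 p3 * T) (1 + ι1 q3 * T) (C k3 * T)⁆ -
        (-2 : ℂ) • der (-V * Y ^ 2 + ι2 p4 * T) (ι1 q4 * T) (C k4 * T)) V =
      ι1 (Polynomial.C k1 * q3 - Polynomial.derivative q1 - Polynomial.C k3 * q1 + 2 * q4) * T +
        ι1 (Polynomial.derivative q3 * q1 - Polynomial.derivative q1 * q3) * T ^ 2 := by
  simp only [Derivation.sub_apply, Derivation.commutator_apply, Derivation.smul_apply,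
    Derivation.leibniz, Derivation.map_one_eq_zero, map_add, der_apply_V, der_apply_T,
    der_apply_ι1, smul_eq_mul, smul_eq_C_mul, map_mul, map_sub, map_ofNat, ι1_C, map_neg]
  ring

end Bracket

theorem bracket_E1_E3 (p1 p3 p4 : MvPolynomial (Fin 2) ℂ) (q1 q3 q4 : Polynomial ℂ)
    (k1 k3 k4 : ℂ) (E1 E3 E4 : Derivation ℂ S S)
    (hE1 : E1 = der (-V ^ 2 * Y ^ 2 + ι2 p1 * T) (ι1 q1 * T) (C k1 * T))
    (hE3 : E3 = der (ι2 p3 * T) (1 + ι1 q3 * T) (C k3 * T))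
    (hE4 : E4 = der (-V * Y ^ 2 + ι2 p4 * T) (ι1 q4 * T) (C k4 * T))
    (h : ModT2 ⁅E1, E3⁆ ((-2 : ℂ) • E4)) :
    k4 = 0 ∧
      -Polynomial.derivative q1 + Polynomial.C k1 * q3 - Polynomial.C k3 * q1 = -2 * q4 := by
  subst hE1 hE3 hE4
  have hT := h 2
  have hV := h 0
  rw [show (X 2 : S) = T from rfl, bracket_sub_apply_T, ι1_mul_T_mem_span_T_sq_iff] at hT
  rw [show (X 0 : S) = V from rfl, bracket_sub_apply_V,
    Ideal.add_mem_iff_left _ (Ideal.mul_mem_left _ _ (Ideal.mem_span_singleton_self _)),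
    ι1_mul_T_mem_span_T_sq_iff] at hV
  refine ⟨by simpa using hT, ?_⟩
  linear_combination hV

end
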